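/- For real z with 0 ≤ z < 1, ∑_{n=0}^{∞} (1/16^n) C(2n,n)^2 z^{2n} = (2/π) K(z), where K is the complete elliptic integral of the first kind. -/

import Mathlib

/-- Complete elliptic integral of the first kind. -/
noncomputable def ellipticK (k : ℝ) : ℝ :=
  ∫ θ in (0 : ℝ)..(Real.pi / 2), 1 / Real.sqrt (1 - k ^ 2 * Real.sin θ ^ 2)

/-!
Expand the integrand of `K(z)` by the binomial series
`1 / √(1 - x) = ∑ C(2n,n) / 4ⁿ xⁿ` at `x = z² sin² θ`, integrate term by term (the terms are
dominated by the geometric series in `z²`), and evaluate each term with Wallis' integral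
`∫₀^{π/2} sin^{2n} θ dθ = (π / 2) C(2n,n) / 4ⁿ`.
-/

open Real intervalIntegral Nat

theorem centralBinom_succ_div_four_pow (n : ℕ) :
    ((n + 1).centralBinom / 4 ^ (n + 1) : ℝ) =
      (2 * n + 1) / (2 * n + 2) * (n.centralBinom / 4 ^ n) := by
  have h := congrArg (Nat.cast (R := ℝ)) (succ_mul_centralBinom_succ n)
  push_cast at h
  field_simp
  rw [pow_succ]
  linear_combination 2 * (4 : ℝ) ^ n * h

theorem abs_centralBinom_div_four_pow_le_one (n : ℕ) : |(n.centralBinom / 4 ^ n : ℝ)| ≤ 1 := by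
  rw [abs_of_nonneg (by positivity), div_le_one (by positivity)]
  exact_mod_cast centralBinom_le_four_pow n

theorem integral_sin_pow_even_zero_pi_div_two (n : ℕ) :
    ∫ θ in (0 : ℝ)..π / 2, sin θ ^ (2 * n) = π / 2 * (n.centralBinom / 4 ^ n) := by
  induction n with
  | zero => simp
  | succ n ih =>
    rw [mul_add_one, integral_sin_pow, ih, centralBinom_succ_div_four_pow]
    simp only [sin_zero, cos_pi_div_two, zero_pow (succ_ne_zero _), zero_mul, mul_zero, sub_self,
      zero_div, zero_add]
    push_cast
    ring

theorem ascPochhammer_eval_one_half (n : ℕ) :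
    (ascPochhammer ℝ n).eval (1 / 2) = n ! * (n.centralBinom / 4 ^ n) := by
  induction n with
  | zero => simp
  | succ n ih =>
    rw [ascPochhammer_succ_eval, ih, centralBinom_succ_div_four_pow, factorial_succ]
    push_cast
    field_simp
    ring

theorem Ring.multichoose_one_half (n : ℕ) :
    Ring.multichoose (1 / 2 : ℝ) n = n.centralBinom / 4 ^ n := by
  have h := Ring.factorial_nsmul_multichoose_eq_ascPochhammer (1 / 2 : ℝ) n
  rw [Polynomial.ascPochhammer_smeval_eq_eval, ascPochhammer_eval_one_half, nsmul_eq_mul] at h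
  exact mul_left_cancel₀ (by positivity) h

theorem hasSum_centralBinom_div_four_pow_mul_pow {x : ℝ} (hx : |x| < 1) :
    HasSum (fun n : ℕ => (n.centralBinom / 4 ^ n : ℝ) * x ^ n) (1 / √(1 - x)) := by
  have h := (one_div_one_sub_rpow_hasFPowerSeriesOnBall_zero (1 / 2)).hasSum
    (y := x) (by simpa [enorm_eq_nnnorm, ← NNReal.coe_lt_one] using hx)
  simp only [FormalMultilinearSeries.ofScalars_apply_eq, zero_add, smul_eq_mul] at h
  rw [sqrt_eq_rpow]
  refine h.congr_fun fun n => ?_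
  rw [← Ring.multichoose_eq, Ring.multichoose_one_half]

theorem hasSum_integral_comp_mul_sin_sq {a : ℕ → ℝ} {f : ℝ → ℝ} {c : ℝ} (ha : ∀ n, |a n| ≤ 1)
    (hc : |c| < 1) (hf : ∀ x, |x| ≤ |c| → HasSum (fun n => a n * x ^ n) (f x)) :
    HasSum (fun n => a n * c ^ n * ∫ θ in (0 : ℝ)..π / 2, sin θ ^ (2 * n))
      (∫ θ in (0 : ℝ)..π / 2, f (c * sin θ ^ 2)) := by
  have hsin (θ : ℝ) : |c * sin θ ^ 2| ≤ |c| := by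
    rw [abs_mul, abs_pow, sq_abs]
    exact mul_le_of_le_one_right (abs_nonneg c) (sin_sq_le_one θ)
  have hterm (n : ℕ) (θ : ℝ) : a n * (c * sin θ ^ 2) ^ n = a n * c ^ n * sin θ ^ (2 * n) := by
    rw [mul_pow, pow_mul]
    ring
  have hbound (n : ℕ) (θ : ℝ) : ‖a n * (c * sin θ ^ 2) ^ n‖ ≤ |c| ^ n := by
    rw [norm_mul, norm_pow, Real.norm_eq_abs, Real.norm_eq_abs]
    exact (mul_le_of_le_one_left (by positivity) (ha n)).trans
      (pow_le_pow_left₀ (abs_nonneg _) (hsin θ) n)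
  have h : HasSum (fun n => ∫ θ in (0 : ℝ)..π / 2, a n * (c * sin θ ^ 2) ^ n)
      (∫ θ in (0 : ℝ)..π / 2, f (c * sin θ ^ 2)) :=
    hasSum_integral_of_dominated_convergence (fun n _ => |c| ^ n)
      (fun n => by fun_prop) (fun n => .of_forall fun θ _ => hbound n θ)
      (.of_forall fun _ _ => summable_geometric_of_lt_one (abs_nonneg c) hc)
      intervalIntegrable_const (.of_forall fun θ _ => hf _ (hsin θ))
  simpa only [hterm, integral_const_mul] using h

theorem rw2d_return_genfun (z : ℝ) (h0 : 0 ≤ z) (h1 : z < 1) :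
    ∑' n : ℕ, (1 / 16 ^ n) * ((2 * n).choose n : ℝ) ^ 2 * z ^ (2 * n) =
      (2 / Real.pi) * ellipticK z := by
  have hz : |z ^ 2| < 1 := by
    rw [abs_of_nonneg (by positivity)]
    exact pow_lt_one₀ h0 h1 two_ne_zero
  have hK := hasSum_integral_comp_mul_sin_sq abs_centralBinom_div_four_pow_le_one hz
    fun x hx => hasSum_centralBinom_div_four_pow_mul_pow (hx.trans_lt hz)
  rw [ellipticK, ← hK.tsum_eq, ← tsum_mul_left]
  congr 1 with n
  rw [integral_sin_pow_even_zero_pi_div_two, ← centralBinom_eq_two_mul_choose, pow_mul,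
    show (16 : ℝ) ^ n = 4 ^ n * 4 ^ n by rw [← mul_pow]; norm_num]
  field_simp
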